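/- Let G = (V, E) be a cubic (3-regular) simple graph and let (S, C, H, M_G) be the associated assignment problem with couples. If G admits a proper 3-edge-coloring, then the target matrix M_G is decomposable, i.e., M_G is a convex combination of deterministic assignment matrices. -/

import Mathlib

/-!
Fix a proper 3-edge-coloring `χ`. For each shift `j ∈ ℤ/3`, send the couple of an edge `e` to
the hospital of `e` of color `χ e + j`, and the single of `e` with color `i` to its vertex
hospital if `i = χ e + j` and to the hospital of `e` of color `i` otherwise. This is a
deterministic assignment: a hospital of `e` receives either the couple or the two singles of
its color, and the vertex hospital `(v, i)` receives the single of the unique edge at `v` of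
color `i - j`. Averaging the three shifts gives `M_G`, since exactly one shift sends `χ e` to
any given color.
-/

open Finset

/-- `(S, C, H, M)` (with `I`, `H` types of interns and hospitals) is an assignment problem
with couples: `S` is the set of single interns, `C` the set of couples (ordered pairs of
members), every intern is a single or a member of a couple, members of couples are distinct
from each other, from the singles, and from members of other couples, `M ∈ [0,1]^{I×H}`,
each row of `M` sums to `1`, and both members of a couple have identical rows. -/
def IsCouplesProblem {I H : Type*} [Fintype I] [Fintype H]
    (S : Finset I) (C : Finset (I × I)) (M : I → H → ℝ) : Prop :=
  (∀ i : I, i ∈ S ∨ ∃ c ∈ C, i = c.1 ∨ i = c.2) ∧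
  (∀ c ∈ C, c.1 ∉ S ∧ c.2 ∉ S ∧ c.1 ≠ c.2) ∧
  (∀ c ∈ C, ∀ c' ∈ C, c ≠ c' →
    c.1 ≠ c'.1 ∧ c.1 ≠ c'.2 ∧ c.2 ≠ c'.1 ∧ c.2 ≠ c'.2) ∧
  (∀ (i : I) (h : H), 0 ≤ M i h ∧ M i h ≤ 1) ∧
  (∀ i : I, ∑ h : H, M i h = 1) ∧
  (∀ c ∈ C, ∀ h : H, M c.1 h = M c.2 h)

/-- `M'` is a deterministic assignment matrix with respect to the problem with couples `C`
and target matrix `M`: its entries are in `{0,1}`, rows sum to `1`, both members of each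
couple have identical rows, and each column sum equals the capacity `q_h = ∑ i, M i h`. -/
def IsDeterministicAssignment {I H : Type*} [Fintype I] [Fintype H]
    (C : Finset (I × I)) (M M' : I → H → ℝ) : Prop :=
  (∀ (i : I) (h : H), M' i h = 0 ∨ M' i h = 1) ∧
  (∀ i : I, ∑ h : H, M' i h = 1) ∧
  (∀ c ∈ C, ∀ h : H, M' c.1 h = M' c.2 h) ∧
  (∀ h : H, ∑ i : I, M' i h = ∑ i : I, M i h)

/-- `M` is decomposable: it is a convex combination (with weights in `(0,1)`) of
deterministic assignment matrices. -/
def Decomposable {I H : Type*} [Fintype I] [Fintype H]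
    (C : Finset (I × I)) (M : I → H → ℝ) : Prop :=
  ∃ (K : ℕ) (lam : Fin K → ℝ) (Ms : Fin K → I → H → ℝ),
    (∀ k, 0 < lam k ∧ lam k < 1) ∧ (∑ k, lam k = 1) ∧
    (∀ k, IsDeterministicAssignment C M (Ms k)) ∧
    (∀ (i : I) (h : H), M i h = ∑ k, lam k * Ms k i h)


section CubicGraph

variable {V : Type*} [Fintype V] [DecidableEq V] (G : SimpleGraph V) [DecidableRel G.Adj]

/-- The edges of `G`, as a type. -/
abbrev GEdge := {e : Sym2 V // e ∈ G.edgeSet}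

/-- The interns of the assignment problem associated to `G`: for each edge `e` there is
one couple (two members, indexed by `Bool`) and six singles, indexed by a color
`i ∈ {1,2,3}` together with an endpoint `w` of `e`. -/
abbrev GIntern :=
  (GEdge G × Bool) ⊕ {p : GEdge G × Fin 3 × V // p.2.2 ∈ (p.1 : Sym2 V)}

/-- The hospitals of the assignment problem associated to `G`: for each edge `e` the three
hospitals `A(e), B(e), C(e)` (indexed by `GEdge G × Fin 3`), and for each vertex `v` and
color `i` the hospital `(v, i)`. -/
abbrev GHospital := (GEdge G × Fin 3) ⊕ (V × Fin 3)

/-- The target matrix associated to `G`: the couple of edge `e` has probability `1/3` at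
each of `A(e), B(e), C(e)`; the single of edge `e`, color `i` and endpoint `w` has
probability `2/3` at the `i`-th hospital of `e` and probability `1/3` at hospital
`(w, i)`. -/
noncomputable def GM : GIntern G → GHospital G → ℝ
  | Sum.inl (e, _), Sum.inl (e', _) => if e' = e then 1 / 3 else 0
  | Sum.inl _, Sum.inr _ => 0
  | Sum.inr p, Sum.inl (e', i') => if e' = p.1.1 ∧ i' = p.1.2.1 then 2 / 3 else 0
  | Sum.inr p, Sum.inr (v, i') => if v = p.1.2.2 ∧ i' = p.1.2.1 then 1 / 3 else 0

/-- The set of single interns of the problem associated to `G`. -/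
def GS : Finset (GIntern G) := Finset.univ.filter fun i => i.isRight

instance : DecidableEq (GIntern G × GIntern G) := instDecidableEqProd

/-- The set of couples of the problem associated to `G`: one couple per edge. -/
def GC : Finset (GIntern G × GIntern G) :=
  Finset.univ.image fun e : GEdge G => (Sum.inl (e, false), Sum.inl (e, true))

end CubicGraph

section AssignmentMatrix

variable {I H : Type*} [Fintype I] [DecidableEq H]

def assignmentMatrix (f : I → H) : I → H → ℝ := fun i h => if f i = h then 1 else 0

lemma sum_assignmentMatrix_col (f : I → H) (h : H) :
    ∑ i, assignmentMatrix f i h = #{i | f i = h} := by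
  simp [assignmentMatrix]

variable [Fintype H]

lemma isDeterministicAssignment_assignmentMatrix {C : Finset (I × I)} {M : I → H → ℝ}
    {f : I → H} (hC : ∀ c ∈ C, f c.1 = f c.2) (hcap : ∀ h, #{i | f i = h} = ∑ i, M i h) :
    IsDeterministicAssignment C M (assignmentMatrix f) := by
  refine ⟨fun i h => ?_, fun i => ?_, fun c hc h => ?_, fun h => ?_⟩
  · unfold assignmentMatrix; split_ifs <;> simp
  · simp [assignmentMatrix]
  · simp [assignmentMatrix, hC c hc]
  · rw [sum_assignmentMatrix_col, hcap]

theorem decomposable_of_sum_assignmentMatrix {ι : Type*} [Fintype ι] (hι : 1 < Fintype.card ι)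
    {C : Finset (I × I)} {M : I → H → ℝ} (f : ι → I → H) (q : H → ℕ)
    (hC : ∀ k, ∀ c ∈ C, f k c.1 = f k c.2) (hcap : ∀ k h, #{i | f k i = h} = q h)
    (hM : ∀ i h, Fintype.card ι * M i h = ∑ k, assignmentMatrix (f k) i h) :
    Decomposable C M := by
  have hn : (1 : ℝ) < Fintype.card ι := by exact_mod_cast hι
  have hcol (h : H) : ∑ i, M i h = q h := by
    have : (Fintype.card ι : ℝ) * ∑ i, M i h = Fintype.card ι * q h := by
      simp_rw [Finset.mul_sum, hM]
      rw [Finset.sum_comm]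
      simp [sum_assignmentMatrix_col, hcap]
    exact mul_left_cancel₀ (by positivity) this
  let e := Fintype.equivFin ι
  refine ⟨Fintype.card ι, fun _ => (Fintype.card ι : ℝ)⁻¹,
    fun k => assignmentMatrix (f (e.symm k)),
    fun _ => ⟨by positivity, inv_lt_one_of_one_lt₀ hn⟩, ?_,
    fun k => isDeterministicAssignment_assignmentMatrix (hC _) fun h => by rw [hcap, hcol],
    fun i h => ?_⟩
  · simp [(zero_lt_one.trans hn).ne']
  · rw [← Finset.mul_sum, e.symm.sum_comp (fun k => assignmentMatrix (f k) i h), ← hM]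
    field_simp

end AssignmentMatrix

lemma card_filter_eq_one_of_injOn {α β : Type*} [Fintype β] [DecidableEq β] {s : Finset α}
    {f : α → β} (hs : #s = Fintype.card β) (hf : Set.InjOn f s) (b : β) :
    #{x ∈ s | f x = b} = 1 := by
  have himage : s.image f = univ := eq_univ_of_card _ (by rw [card_image_of_injOn hf, hs])
  obtain ⟨a, ha, rfl⟩ := mem_image.1 (himage ▸ mem_univ b)
  refine card_eq_one.2 ⟨a, ext fun x => ?_⟩
  simp only [mem_filter, mem_singleton]
  exact ⟨fun ⟨hx, hfx⟩ => hf hx ha hfx, by rintro rfl; exact ⟨ha, rfl⟩⟩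

section EdgeColoring

variable {V : Type*} (G : SimpleGraph V)

def IsProperEdgeColoring {α : Type*} (χ : GEdge G → α) : Prop :=
  ∀ e e' : GEdge G, e ≠ e' →
    (∃ v : V, v ∈ (e : Sym2 V) ∧ v ∈ (e' : Sym2 V)) → χ e ≠ χ e'

def colorAssignment (χ : GEdge G → Fin 3) : GIntern G → GHospital G
  | Sum.inl (e, _) => Sum.inl (e, χ e)
  | Sum.inr p =>
    if χ p.1.1 = p.1.2.1 then Sum.inr (p.1.2.2, p.1.2.1) else Sum.inl (p.1.1, p.1.2.1)

variable {G}

lemma IsProperEdgeColoring.comp_injective {α β : Type*} {χ : GEdge G → α}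
    (hχ : IsProperEdgeColoring G χ) {σ : α → β} (hσ : σ.Injective) :
    IsProperEdgeColoring G (σ ∘ χ) :=
  fun e e' hne hv h => hχ e e' hne hv (hσ h)

variable [DecidableEq V]

lemma sum_assignmentMatrix_colorAssignment_add (χ : GEdge G → Fin 3) (i : GIntern G)
    (h : GHospital G) :
    ∑ j : Fin 3, assignmentMatrix (colorAssignment G fun e => χ e + j) i h = 3 * GM G i h := by
  rcases i with ⟨e, b⟩ | ⟨⟨e, c, w⟩, hw⟩ <;> rcases h with ⟨e', k⟩ | ⟨v, k⟩
  · by_cases he : e' = e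
    · subst he
      simp [assignmentMatrix, colorAssignment, GM, ← eq_sub_iff_add_eq']
    · simp [assignmentMatrix, colorAssignment, GM, he, Ne.symm he]
  · simp [assignmentMatrix, colorAssignment, GM]
  · by_cases hm : e' = e ∧ k = c
    · obtain ⟨rfl, rfl⟩ := hm
      simp [assignmentMatrix, colorAssignment, GM, ← eq_sub_iff_add_eq', sum_ite, filter_ne']
      norm_num
    · simp [assignmentMatrix, colorAssignment, GM, ite_eq_iff, hm]
      exact fun _ _ he hk => hm ⟨he.symm, hk.symm⟩
  · by_cases hm : v = w ∧ k = c
    · obtain ⟨rfl, rfl⟩ := hm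
      simp [assignmentMatrix, colorAssignment, GM, ← eq_sub_iff_add_eq']
    · simp [assignmentMatrix, colorAssignment, GM, ite_eq_iff, hm]
      exact fun _ _ hw hk => hm ⟨hw.symm, hk.symm⟩

variable [Fintype V] [DecidableRel G.Adj]

lemma card_edges_incident {d : ℕ} (hreg : G.IsRegularOfDegree d) (v : V) :
    #{e : GEdge G | v ∈ (e : Sym2 V)} = d := by
  have : ({e : GEdge G | v ∈ (e : Sym2 V)} : Finset _) =
      (G.incidenceFinset v).subtype (· ∈ G.edgeSet) := by
    ext e; simp [SimpleGraph.mem_incidenceFinset, SimpleGraph.incidenceSet, e.2]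
  rw [this, card_subtype, filter_true_of_mem fun e he => ((G.mem_incidenceFinset v e).1 he).1,
    G.card_incidenceFinset_eq_degree, hreg v]

lemma IsProperEdgeColoring.card_edges_incident_eq_one {d : ℕ} (hreg : G.IsRegularOfDegree d)
    {χ : GEdge G → Fin d} (hχ : IsProperEdgeColoring G χ) (v : V) (k : Fin d) :
    #{e : GEdge G | v ∈ (e : Sym2 V) ∧ χ e = k} = 1 := by
  rw [← filter_filter]
  refine card_filter_eq_one_of_injOn (by rw [card_edges_incident hreg, Fintype.card_fin]) ?_ k
  intro e he e' he' h
  by_contra hne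
  exact hχ e e' hne ⟨v, (mem_filter.1 he).2, (mem_filter.1 he').2⟩ h

lemma card_colorAssignment_eq_edge (χ : GEdge G → Fin 3) (e : GEdge G) (k : Fin 3) :
    #{i | colorAssignment G χ i = Sum.inl (e, k)} = 2 := by
  by_cases hk : χ e = k
  · rw [show 2 = #(univ : Finset Bool) from rfl]
    refine (card_bij (fun b _ => Sum.inl (e, b)) ?_ ?_ ?_).symm
    · simp only [mem_filter, mem_univ, true_and]
      simp [colorAssignment, hk]
    · simp
    · simp only [mem_filter, mem_univ, true_and]
      rintro (⟨e', b⟩ | ⟨⟨e', i, w⟩, hw⟩) hi <;>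
        simp [colorAssignment, ite_eq_iff] at hi
      · exact ⟨b, by simp [hi.1]⟩
      · exact absurd (hi.2.1 ▸ hi.2.2 ▸ hk) hi.1
  · rw [← Sym2.card_toFinset_of_not_isDiag _ (G.not_isDiag_of_mem_edgeSet e.2)]
    refine (card_bij (fun w hw => Sum.inr ⟨(e, k, w), Sym2.mem_toFinset.1 hw⟩) ?_ ?_ ?_).symm
    · simp only [mem_filter, mem_univ, true_and]
      simp [colorAssignment, hk]
    · simp
    · simp only [mem_filter, mem_univ, true_and]
      rintro (⟨e', b⟩ | ⟨⟨e', i, w⟩, hw : w ∈ (e' : Sym2 V)⟩) hi <;>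
        simp [colorAssignment, ite_eq_iff] at hi
      · exact absurd (hi.1 ▸ hi.2) hk
      · obtain ⟨-, rfl, rfl⟩ := hi
        exact ⟨w, by simpa using hw, rfl⟩

lemma card_colorAssignment_eq_vertex (hreg : G.IsRegularOfDegree 3) {χ : GEdge G → Fin 3}
    (hχ : IsProperEdgeColoring G χ) (v : V) (k : Fin 3) :
    #{i | colorAssignment G χ i = Sum.inr (v, k)} = 1 := by
  rw [← hχ.card_edges_incident_eq_one hreg v k]
  refine (card_bij (fun e he => Sum.inr ⟨(e, k, v), (mem_filter.1 he).2.1⟩) ?_ ?_ ?_).symm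
  · simp only [mem_filter, mem_univ, true_and]
    simp +contextual [colorAssignment]
  · simp
  · simp only [mem_filter, mem_univ, true_and]
    rintro (⟨e', b⟩ | ⟨⟨e', i, w⟩, hw : w ∈ (e' : Sym2 V)⟩) hi <;>
      simp [colorAssignment, ite_eq_iff] at hi
    obtain ⟨rfl, rfl, rfl⟩ := hi
    exact ⟨e', by simpa using hw, rfl⟩

end EdgeColoring

section CubicGraph

variable {V : Type*} [Fintype V] [DecidableEq V] (G : SimpleGraph V) [DecidableRel G.Adj]

/-- if a cubic simple graph `G` admits a proper 3-edge-coloring, then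
the target matrix of the associated assignment problem with couples is decomposable. -/
theorem cubic_colorable_decomposable (hreg : G.IsRegularOfDegree 3)
    (hcol : ∃ χ : GEdge G → Fin 3, ∀ e e' : GEdge G, e ≠ e' →
      (∃ v : V, v ∈ (e : Sym2 V) ∧ v ∈ (e' : Sym2 V)) → χ e ≠ χ e') :
    Decomposable (GC G) (GM G) := by
  obtain ⟨χ, hχ⟩ := hcol
  refine decomposable_of_sum_assignmentMatrix (by simp)
    (fun j : Fin 3 => colorAssignment G fun e => χ e + j) (Sum.elim (fun _ => 2) fun _ => 1)
    ?_ ?_ fun i h => by simp [sum_assignmentMatrix_colorAssignment_add]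
  · rintro j c hc
    obtain ⟨e, -, rfl⟩ := mem_image.1 hc
    rfl
  · rintro j (⟨e, k⟩ | ⟨v, k⟩)
    · exact card_colorAssignment_eq_edge _ e k
    · exact card_colorAssignment_eq_vertex hreg
        (IsProperEdgeColoring.comp_injective hχ (add_left_injective j)) v k

end CubicGraph
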